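/- There exists S such that for all integers s ≥ S, setting n = 3s − 1, for every integer k with 0 < k < s − 1 one has f_{n,2k−1} + 2·f_{n,2k} + ∑_{i=2k+1}^{⌊(n+k)/2⌋} f_{n,i} − f_{n,n−k} < 0, where ⌊·⌋ denotes the integer part. -/

import Mathlib

/-- `f_{n,i}`: the coefficient of `x^i` in `(1 + x + x²)^n`. -/
noncomputable def coeff3 (n i : ℕ) : ℕ :=
  (((1 + Polynomial.X + Polynomial.X ^ 2 : Polynomial ℕ)) ^ n).coeff i

/-!
Write `f_i = f_{n,i}` for `n = 3s - 1`. Comparing coefficients in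
`(1 + x + x²) · x P' = n · x (1 + 2x) · P`, `P = (1 + x + x²)ⁿ`, gives
`(i + 2) f_{i+2} = (n - i - 1) f_{i+1} + (2n - i) f_i`, and two steps of this recurrence
propagate the bound `8 f_i ≤ 5 f_{i+1}` all the way up to `i ≈ 2n/3`. With `M = ⌊(n + k)/2⌋`
the left-hand side is then at most `f_{2k} + ∑_{i ≤ M} f_i ≤ (1 + 8/3) f_M`, whereas
`M + 3 ≤ n - k ≤ n`, so unimodality gives `f_{n-k} ≥ f_{M+3} ≥ (8/5)³ f_M > (11/3) f_M`.
-/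

open Polynomial Finset

section Polynomial

variable {R : Type*}

theorem coeff_one_add_X_add_X_sq_mul_add_two [Semiring R] (p : R[X]) (i : ℕ) :
    ((1 + X + X ^ 2) * p).coeff (i + 2) = p.coeff (i + 2) + p.coeff (i + 1) + p.coeff i := by
  simp only [add_mul, one_mul, coeff_add, coeff_X_pow_mul, coeff_X_mul]

theorem coeff_one_add_X_add_X_sq_mul_one [Semiring R] (p : R[X]) :
    ((1 + X + X ^ 2) * p).coeff 1 = p.coeff 1 + p.coeff 0 := by
  simp [add_mul, coeff_X_mul, coeff_X_pow_mul']

theorem coeff_X_mul_derivative [Semiring R] (p : R[X]) (i : ℕ) :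
    (X * derivative p).coeff i = i * p.coeff i := by
  cases i with
  | zero => simp
  | succ i => rw [coeff_X_mul, coeff_derivative, (Nat.cast_commute _ _).eq]; push_cast; rfl

theorem reflect_pow_of_reflect_eq [CommSemiring R] {p : R[X]} {d : ℕ}
    (hdeg : p.natDegree ≤ d) (hp : p.reflect d = p) (n : ℕ) :
    (p ^ n).reflect (n * d) = p ^ n := by
  induction n with
  | zero => simp
  | succ n ih =>
    rw [pow_succ, add_one_mul, reflect_mul _ _ (natDegree_pow_le_of_le n hdeg) hdeg, ih, hp]

end Polynomial

section Ratio

/-- The first recurrence and `8a ≤ 5b` give `8(i+2)c ≤ Db` with `D = 8(N-i-1) + 5(2N-i)`;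
substituting this into the second one, `8c ≤ 5d` reduces to `Q ≥ 0` for the quadratic form
`Q = 5D(N-i-2) + 40(2N-i-1)(i+2) - 8D(i+3)`. -/
theorem ratio_bound_step {N i a b c d : ℤ} (hN : 110 ≤ N) (hiN : 3 * i + 4 ≤ 2 * N)
    (hi : 0 ≤ i) (hc₀ : 0 ≤ c) (hc : (i + 2) * c = (N - i - 1) * b + (2 * N - i) * a)
    (hd : (i + 3) * d = (N - i - 2) * c + (2 * N - i - 1) * b) (hab : 8 * a ≤ 5 * b) :
    8 * c ≤ 5 * d := by
  set D := 18 * N - 13 * i - 8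
  have hcb : 8 * (i + 2) * c ≤ D * b := by
    nlinarith [mul_le_mul_of_nonneg_left hab (by linarith : 0 ≤ 2 * N - i)]
  -- `3Q = 4(N - 110)(N + 1) + u(47N - 82) + 43u²` with `u = 2N - 4 - 3i ≥ 0`
  have hQ : 0 ≤ 5 * D * (N - i - 2) + 40 * (2 * N - i - 1) * (i + 2) - 8 * D * (i + 3) := by
    nlinarith [mul_nonneg (by linarith : (0 : ℤ) ≤ N - 110) (by linarith : (0 : ℤ) ≤ N + 1),
      mul_nonneg (by linarith : (0 : ℤ) ≤ 2 * N - 4 - 3 * i) (by linarith : (0 : ℤ) ≤ 47 * N - 82),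
      sq_nonneg (2 * N - 4 - 3 * i)]
  have hD : 0 < D * (i + 3) := mul_pos (by omega) (by omega)
  refine le_of_mul_le_mul_left ?_ hD
  nlinarith [mul_le_mul_of_nonneg_left hcb (by linarith : 0 ≤ 5 * (2 * N - i - 1)),
    mul_nonneg hQ hc₀]

variable {g : ℕ → ℕ} {p q : ℕ}

theorem mul_sum_range_le_of_ratio {m : ℕ} (hpq : p ≤ q)
    (h : ∀ j < m, q * g j ≤ p * g (j + 1)) :
    (q - p) * ∑ j ∈ range (m + 1), g j ≤ q * g m := by
  induction m with
  | zero => simpa using Nat.mul_le_mul_right (g 0) (Nat.sub_le q p)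
  | succ m ih =>
    rw [sum_range_succ, mul_add]
    have hm := h m (by omega)
    have := ih fun j hj => h j (by omega)
    calc (q - p) * ∑ j ∈ range (m + 1), g j + (q - p) * g (m + 1)
        ≤ p * g (m + 1) + (q - p) * g (m + 1) := by omega
      _ = q * g (m + 1) := by rw [← add_mul, Nat.add_sub_cancel' hpq]

theorem pow_mul_le_pow_mul_of_ratio {j k : ℕ}
    (h : ∀ t < k, q * g (j + t) ≤ p * g (j + t + 1)) : q ^ k * g j ≤ p ^ k * g (j + k) := by
  induction k with
  | zero => simp
  | succ k ih =>
    calc q ^ (k + 1) * g j = q * (q ^ k * g j) := by ring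
      _ ≤ q * (p ^ k * g (j + k)) := Nat.mul_le_mul_left _ (ih fun t ht => h t (by omega))
      _ = p ^ k * (q * g (j + k)) := by ring
      _ ≤ p ^ k * (p * g (j + k + 1)) := Nat.mul_le_mul_left _ (h k (by omega))
      _ = p ^ (k + 1) * g (j + (k + 1)) := by rw [← add_assoc]; ring

end Ratio

theorem add_add_sum_Icc_le_sum_range (g : ℕ → ℕ) {j m : ℕ} (h : j + 1 ≤ m) :
    g j + g (j + 1) + ∑ i ∈ Icc (j + 2) m, g i ≤ ∑ i ∈ range (m + 1), g i := by
  have hsub : insert j (insert (j + 1) (Icc (j + 2) m)) ⊆ range (m + 1) := by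
    intro x; simp only [mem_insert, mem_Icc, mem_range]; omega
  have := sum_le_sum_of_subset (f := g) hsub
  rwa [sum_insert (by simp), sum_insert (by simp), ← add_assoc] at this

theorem coeff3_zero (n : ℕ) : coeff3 n 0 = 1 := by
  simp [coeff3, coeff_zero_eq_eval_zero]

theorem coeff3_one (n : ℕ) : coeff3 n 1 = n := by
  induction n with
  | zero => simp [coeff3, coeff_one]
  | succ n ih =>
    rw [coeff3, pow_succ', coeff_one_add_X_add_X_sq_mul_one]
    exact congrArg₂ (· + ·) ih (coeff3_zero n)

theorem coeff3_succ_add_two (n i : ℕ) :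
    coeff3 (n + 1) (i + 2) = coeff3 n (i + 2) + coeff3 n (i + 1) + coeff3 n i := by
  rw [coeff3, pow_succ', coeff_one_add_X_add_X_sq_mul_add_two]; rfl

theorem reflect_one_add_X_add_X_sq : (1 + X + X ^ 2 : ℕ[X]).reflect 2 = 1 + X + X ^ 2 := by
  have hX := reflect_monomial (R := ℕ) 2 1
  rw [pow_one] at hX
  rw [reflect_add, reflect_add, reflect_one, hX, reflect_monomial, revAt_le (by norm_num),
    revAt_le le_rfl]
  ring

theorem coeff3_symm (n : ℕ) {i : ℕ} (hi : i ≤ 2 * n) : coeff3 n i = coeff3 n (2 * n - i) := by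
  have hdeg : (1 + X + X ^ 2 : ℕ[X]).natDegree ≤ 2 := by compute_degree
  rw [coeff3, ← reflect_pow_of_reflect_eq hdeg reflect_one_add_X_add_X_sq n, coeff_reflect,
    revAt_le (by omega), mul_comm]
  rfl

theorem coeff3_le_coeff3_succ {n i : ℕ} (hi : i < n) : coeff3 n i ≤ coeff3 n (i + 1) := by
  induction n generalizing i with
  | zero => omega
  | succ n ih =>
    match i with
    | 0 => simp [coeff3_zero, coeff3_one]
    | 1 => rw [coeff3_one, coeff3_succ_add_two, coeff3_one, coeff3_zero]; omega
    | j + 2 =>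
      have hj : coeff3 n j ≤ coeff3 n (j + 1) := ih (by omega)
      have hj' : coeff3 n (j + 1) ≤ coeff3 n (j + 3) := by
        rcases Nat.lt_or_ge (j + 2) n with h | h
        · exact (ih (by omega)).trans (ih h)
        · rw [coeff3_symm n (i := j + 3) (by omega)]
          exact le_of_eq (congrArg _ (by omega))
      have h₀ := coeff3_succ_add_two n j
      have h₁ := coeff3_succ_add_two n (j + 1)
      simp only [add_assoc, Nat.reduceAdd] at h₀ h₁ ⊢
      omega

theorem coeff3_monotoneOn (n : ℕ) : MonotoneOn (coeff3 n) (Set.Iic n) :=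
  monotoneOn_of_le_succ Set.ordConnected_Iic fun _ _ _ hi =>
    coeff3_le_coeff3_succ (Order.succ_le_iff.mp hi)

/-- Coefficientwise form of `q · X (qⁿ)' = n · X q' · qⁿ` for `q = 1 + X + X²`. -/
theorem coeff3_recurrence (n i : ℕ) :
    (i + 2) * coeff3 n (i + 2) + (i + 1) * coeff3 n (i + 1) + i * coeff3 n i =
      n * coeff3 n (i + 1) + 2 * n * coeff3 n i := by
  have euler : (1 + X + X ^ 2) * (X * derivative ((1 + X + X ^ 2 : ℕ[X]) ^ n)) =
      C n * (X * (1 + X + X ^ 2) ^ n + C 2 * (X ^ 2 * (1 + X + X ^ 2) ^ n)) := by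
    rcases n with _ | n
    · simp
    · rw [derivative_pow_succ]
      simp only [derivative_add, derivative_one, derivative_X, derivative_X_pow]
      push_cast; ring
  have := congrArg (coeff · (i + 2)) euler
  simp only [coeff_one_add_X_add_X_sq_mul_add_two, coeff_X_mul_derivative] at this
  simp only [coeff_C_mul, coeff_add, coeff_X_mul, coeff_X_pow_mul] at this
  simpa [coeff3, mul_add, mul_assoc, mul_left_comm] using this

theorem eight_mul_coeff3_le_five_mul_coeff3_succ {n i : ℕ} (hn : 110 ≤ n)
    (hi : 3 * i ≤ 2 * n + 2) : 8 * coeff3 n i ≤ 5 * coeff3 n (i + 1) := by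
  induction i using Nat.twoStepInduction with
  | zero => rw [coeff3_zero, coeff3_one]; omega
  | one =>
    have h := coeff3_recurrence n 0
    rw [coeff3_one, coeff3_zero] at h
    norm_num at h
    show 8 * coeff3 n 1 ≤ 5 * coeff3 n 2
    rw [coeff3_one]
    nlinarith
  | more i ih _ =>
    have h₀ := coeff3_recurrence n i
    have h₁ := coeff3_recurrence n (i + 1)
    zify at h₀ h₁ ih ⊢
    exact ratio_bound_step (N := n) (i := i) (by exact_mod_cast hn) (by omega) (by positivity)
      (by positivity) (by linarith) (by linarith) (ih (by omega))

/-- For `n = 3s - 1` with `s` large and `0 < k < s - 1`,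
`f_{n,2k-1} + 2 f_{n,2k} + ∑_{i=2k+1}^{⌊(n+k)/2⌋} f_{n,i} - f_{n,n-k} < 0`. -/
theorem ineq_three_s_sub_one :
    ∃ S : ℕ, ∀ s : ℕ, S ≤ s → ∀ k : ℕ, 0 < k → k < s - 1 →
      (coeff3 (3 * s - 1) (2 * k - 1) : ℤ) + 2 * (coeff3 (3 * s - 1) (2 * k) : ℤ) +
          (∑ i ∈ Finset.Icc (2 * k + 1) (((3 * s - 1) + k) / 2),
            (coeff3 (3 * s - 1) i : ℤ)) -
          (coeff3 (3 * s - 1) ((3 * s - 1) - k) : ℤ) < 0 := by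
  refine ⟨37, fun s hs k hk hks => ?_⟩
  set n := 3 * s - 1
  set M := (n + k) / 2
  have ratio : ∀ i ≤ M + 2, 8 * coeff3 n i ≤ 5 * coeff3 n (i + 1) :=
    fun i hi => eight_mul_coeff3_le_five_mul_coeff3_succ (by omega) (by omega)
  have head : coeff3 n (2 * k - 1) + coeff3 n (2 * k) + ∑ i ∈ Icc (2 * k + 1) M, coeff3 n i ≤
      ∑ i ∈ range (M + 1), coeff3 n i := by
    have := add_add_sum_Icc_le_sum_range (coeff3 n) (j := 2 * k - 1) (m := M) (by omega)
    rwa [show 2 * k - 1 + 1 = 2 * k by omega, show 2 * k - 1 + 2 = 2 * k + 1 by omega] at this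
  have geom : (8 - 5) * ∑ i ∈ range (M + 1), coeff3 n i ≤ 8 * coeff3 n M :=
    mul_sum_range_le_of_ratio (by norm_num) fun j hj => ratio j (by omega)
  have middle : coeff3 n (2 * k) ≤ coeff3 n M :=
    coeff3_monotoneOn n (Set.mem_Iic.2 (by omega)) (Set.mem_Iic.2 (by omega)) (by omega)
  have growth : 8 ^ 3 * coeff3 n M ≤ 5 ^ 3 * coeff3 n (M + 3) :=
    pow_mul_le_pow_mul_of_ratio fun t ht => ratio (M + t) (by omega)
  have tail : coeff3 n (M + 3) ≤ coeff3 n (n - k) :=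
    coeff3_monotoneOn n (Set.mem_Iic.2 (by omega)) (Set.mem_Iic.2 (by omega)) (by omega)
  have pos : 1 ≤ coeff3 n M :=
    coeff3_zero n ▸ coeff3_monotoneOn n (Set.mem_Iic.2 (by omega)) (Set.mem_Iic.2 (by omega))
      (Nat.zero_le M)
  zify at head geom middle growth tail pos
  linarith
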